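/- arXiv:2408.01513 — 2 statements merged into one kernel-verified Lean document; each statement's English description precedes it below -/
import Mathlib

section
/- Let h, w, w₀ : ℤ⁺ → ℤ⁺ with w₀ ≻ w ≻ 1 and with w(n) dividing w₀(n) for all n. Then max((w₀/w)·L[h,w], L^{⌈w²/4⌉}[h, w₀/w]) ≾ L[h, w₀]; that is, limsup of each of (w₀/w)·L[h,w] / L[h,w₀] and L^{⌈w²/4⌉}[h, w₀/w] / L[h,w₀] is at most 1. -/
open Finset



open Filter

/-- A Kostant picture of height `η`. -/
def IsKostant {w : ℕ} (η : Fin w → ℕ) (c : Fin w → Fin w → ℕ) : Prop :=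
  (∀ i j : Fin w, j < i → c i j = 0) ∧
  ∀ m : Fin w, (∑ i : Fin w, ∑ j : Fin w, (if i ≤ m ∧ m ≤ j then c i j else 0)) = η m

/-- Kostant's partition function. -/
noncomputable def KPF {w : ℕ} (η : Fin w → ℕ) : ℕ :=
  Set.ncard {c : Fin w → Fin w → ℕ | IsKostant η c}

lemma sum_range_mul_split (f : ℕ → ℕ) (q W : ℕ) :
    ∑ x ∈ Finset.range (q * W), f x = ∑ i ∈ Finset.range q, ∑ a ∈ Finset.range W, f (i * W + a) := by
  induction q with
  | zero => simp
  | succ q ih =>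
    have h1 : (q + 1) * W = q * W + W := by ring
    rw [h1, Finset.sum_range_add, ih, Finset.sum_range_succ]

lemma fin_double_sum (n : ℕ) (g : ℕ → ℕ → ℕ) :
    (∑ i : Fin n, ∑ j : Fin n, g i.1 j.1) = ∑ i ∈ range n, ∑ j ∈ range n, g i j := by
  rw [Fin.sum_univ_eq_sum_range (fun i => ∑ j : Fin n, g i j)]
  exact Finset.sum_congr rfl fun i _ => Fin.sum_univ_eq_sum_range (fun j => g i j) n

lemma isKostant_iff_nat {n : ℕ} (h : ℕ) (EN : ℕ → ℕ → ℕ) :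
    IsKostant (fun _ : Fin n => h) (fun I J => EN I.1 J.1) ↔
    ((∀ I J, I < n → J < n → J < I → EN I J = 0) ∧
      ∀ m < n, (∑ I ∈ range n, ∑ J ∈ range n, if I ≤ m ∧ m ≤ J then EN I J else 0) = h) := by
  have key : ∀ m : Fin n,
      (∑ i : Fin n, ∑ j : Fin n, if i ≤ m ∧ m ≤ j then EN i.1 j.1 else 0)
        = ∑ I ∈ range n, ∑ J ∈ range n, if I ≤ m.1 ∧ m.1 ≤ J then EN I J else 0 := by
    intro m
    rw [← fin_double_sum n (fun I J => if I ≤ m.1 ∧ m.1 ≤ J then EN I J else 0)]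
    rfl
  constructor
  · rintro ⟨h0, h1⟩
    refine ⟨fun I J hI hJ hlt => h0 ⟨I, hI⟩ ⟨J, hJ⟩ hlt, fun m hm => ?_⟩
    have := h1 ⟨m, hm⟩
    rw [key ⟨m, hm⟩] at this
    exact this
  · rintro ⟨h0, h1⟩
    exact ⟨fun i j hlt => h0 i.1 j.1 i.2 j.2 hlt, fun m => (key m).trans (h1 m.1 m.2)⟩

-- bound on entries
lemma kostant_entry_le {n : ℕ} (η : Fin n → ℕ) (c : Fin n → Fin n → ℕ)
    (hc : IsKostant η c) (i j : Fin n) : c i j ≤ ∑ m, η m := by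
  rcases le_or_gt i j with hij | hij
  · calc c i j ≤ ∑ i' : Fin n, ∑ j' : Fin n, (if i' ≤ i ∧ i ≤ j' then c i' j' else 0) := by
          have h1 : (if i ≤ i ∧ i ≤ j then c i j else 0) = c i j := by simp [hij]
          calc c i j = if i ≤ i ∧ i ≤ j then c i j else 0 := h1.symm
            _ ≤ ∑ j' : Fin n, (if i ≤ i ∧ i ≤ j' then c i j' else 0) :=
                Finset.single_le_sum (f := fun j' => if i ≤ i ∧ i ≤ j' then c i j' else 0)
                  (fun _ _ => Nat.zero_le _) (Finset.mem_univ j)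
            _ ≤ _ := Finset.single_le_sum
                  (f := fun i' => ∑ j' : Fin n, (if i' ≤ i ∧ i ≤ j' then c i' j' else 0))
                  (fun _ _ => Nat.zero_le _) (Finset.mem_univ i)
      _ = η i := hc.2 i
      _ ≤ ∑ m, η m := Finset.single_le_sum (fun _ _ => Nat.zero_le _) (Finset.mem_univ i)
  · rw [hc.1 i j hij]; exact Nat.zero_le _

lemma kostant_finite {n : ℕ} (η : Fin n → ℕ) :
    {c : Fin n → Fin n → ℕ | IsKostant η c}.Finite := by
  set B := ∑ m, η m with hB
  apply Set.Finite.subset (Set.Finite.pi (fun i : Fin n =>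
    Set.Finite.pi (fun j : Fin n => Set.finite_Iic B)))
  intro c hc i _ j _
  exact kostant_entry_le η c hc i j

instance kostant_fintype {n : ℕ} (η : Fin n → ℕ) :
    Finite {c : Fin n → Fin n → ℕ | IsKostant η c} := (kostant_finite η).to_subtype

lemma KPF_eq_natCard {n : ℕ} (η : Fin n → ℕ) :
    KPF η = Nat.card {c : Fin n → Fin n → ℕ // IsKostant η c} := by
  rw [KPF, ← Nat.card_coe_set_eq]
  rfl

-- the diagonal picture
lemma diag_isKostant {n : ℕ} (η : Fin n → ℕ) :
    IsKostant η (fun i j => if i = j then η i else 0) := by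
  constructor
  · intro i j hlt
    simp [Fin.ne_of_gt hlt]
  · intro m
    rw [Finset.sum_eq_single m, Finset.sum_eq_single m]
    · simp
    · intro j _ hj
      have : ¬ (m = j) := fun e => hj e.symm
      simp [this]
    · simp
    · intro i _ hi
      apply Finset.sum_eq_zero
      intro j _
      by_cases hij : i = j
      · subst hij
        by_cases h1 : i ≤ m ∧ m ≤ i
        · exact absurd (le_antisymm h1.2 h1.1) (fun e => hi e.symm)
        · simp [h1]
      · simp [hij]
    · simp

lemma KPF_pos {n : ℕ} (η : Fin n → ℕ) : 1 ≤ KPF η := by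
  rw [KPF]
  have hmem : (fun i j => if i = j then η i else 0) ∈ {c : Fin n → Fin n → ℕ | IsKostant η c} :=
    diag_isKostant η
  exact (Set.ncard_pos (kostant_finite η)).mpr ⟨_, hmem⟩

lemma KPF_two {n : ℕ} (h : ℕ) (hh : 1 ≤ h) (hn : 2 ≤ n) :
    2 ≤ KPF (fun _ : Fin n => h) := by
  rw [KPF]
  have hn0 : 0 < n := by omega
  set EN2 : ℕ → ℕ → ℕ := fun I J =>
    if I = 0 ∧ J = 0 then h - 1 else if I = 1 ∧ J = 1 then h - 1 else
    if I = 0 ∧ J = 1 then 1 else if I = J then h else 0 with hEN2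
  have hm2 : IsKostant (fun _ : Fin n => h) (fun I J => EN2 I.1 J.1) := by
    apply (isKostant_iff_nat h EN2).mpr
    constructor
    · intro I J _ _ hlt
      have h1 : ¬(I = 0 ∧ J = 0) := by omega
      have h2 : ¬(I = 1 ∧ J = 1) := by omega
      have h3 : ¬(I = 0 ∧ J = 1) := by omega
      have h4 : ¬(I = J) := by omega
      simp only [hEN2, h1, h2, h3, h4, if_false]
    · intro m hm
      have hsplit : ∀ I ∈ range n, ∀ J ∈ range n,
          (if I ≤ m ∧ m ≤ J then EN2 I J else 0)
          = (if I = m then (if J = m then (if m ≤ 1 then h - 1 else h) else 0) else 0)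
            + (if I = 0 then (if J = 1 then (if m ≤ 1 then 1 else 0) else 0) else 0) := by
        intro I _ J _
        simp only [hEN2]
        split_ifs <;> omega
      rw [Finset.sum_congr rfl (fun I hI => Finset.sum_congr rfl (fun J hJ => hsplit I hI J hJ))]
      have e1 : ∀ (v : ℕ → ℕ) (a : ℕ), a < n →
          (∑ I ∈ range n, ∑ J ∈ range n,
            (if I = a then v J else 0)) = ∑ J ∈ range n, v J := by
        intro v a ha
        rw [Finset.sum_eq_single a]
        · simp
        · intro b _ hb; simp [hb]
        · intro hcon; exact absurd (Finset.mem_range.mpr ha) hcon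
      simp only [Finset.sum_add_distrib]
      have e2 : ∀ (u : ℕ) (a : ℕ), a < n →
          (∑ J ∈ range n, (if J = a then u else 0)) = u := by
        intro u a ha
        rw [Finset.sum_eq_single a]
        · simp
        · intro b _ hb; simp [hb]
        · intro hcon; exact absurd (Finset.mem_range.mpr ha) hcon
      have hA : (∑ I ∈ range n, ∑ J ∈ range n,
          (if I = m then (if J = m then (if m ≤ 1 then h - 1 else h) else 0) else 0))
          = (if m ≤ 1 then h - 1 else h) := by
        rw [Finset.sum_eq_single m]
        · simp only [if_pos rfl]
          exact e2 _ m hm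
        · intro b _ hb
          apply Finset.sum_eq_zero; intro J _; simp [hb]
        · intro hcon; exact absurd (Finset.mem_range.mpr hm) hcon
      have hB : (∑ I ∈ range n, ∑ J ∈ range n,
          (if I = 0 then (if J = 1 then (if m ≤ 1 then 1 else 0) else 0) else 0))
          = (if m ≤ 1 then 1 else 0) := by
        rw [Finset.sum_eq_single 0]
        · simp only [if_pos rfl]
          exact e2 _ 1 (by omega)
        · intro b _ hb
          apply Finset.sum_eq_zero; intro J _; simp [hb]
        · intro hcon; exact absurd (Finset.mem_range.mpr (by omega)) hcon
      rw [hA, hB]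
      split_ifs <;> omega
  have hmem1 : (fun (i : Fin n) (j : Fin n) => if i = j then h else 0)
      ∈ {c : Fin n → Fin n → ℕ | IsKostant (fun _ => h) c} := diag_isKostant _
  have hmem2 : (fun (I : Fin n) (J : Fin n) => EN2 I.1 J.1)
      ∈ {c : Fin n → Fin n → ℕ | IsKostant (fun _ => h) c} := hm2
  have hne : (fun (i : Fin n) (j : Fin n) => if i = j then h else 0)
      ≠ (fun (I : Fin n) (J : Fin n) => EN2 I.1 J.1) := by
    intro hcon
    have := congrFun (congrFun hcon ⟨0, by omega⟩) ⟨1, by omega⟩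
    simp only [hEN2] at this
    rw [if_neg (by simp [Fin.ext_iff])] at this
    simp at this
  exact Set.one_lt_ncard_iff (kostant_finite _) |>.mpr ⟨_, _, hmem1, hmem2, hne⟩

/-- extension of a `Fin`-indexed picture to ℕ indices -/
def extN {n : ℕ} (c : Fin n → Fin n → ℕ) : ℕ → ℕ → ℕ := fun i j =>
  if h' : i < n ∧ j < n then c ⟨i, h'.1⟩ ⟨j, h'.2⟩ else 0

lemma extN_apply {n : ℕ} (c : Fin n → Fin n → ℕ) (i j : Fin n) : extN c i.1 j.1 = c i j := by
  rw [extN, dif_pos ⟨i.2, j.2⟩]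

lemma extN_reshape {n : ℕ} (c : Fin n → Fin n → ℕ) : (fun I J : Fin n => extN c I.1 J.1) = c :=
  funext fun i => funext fun j => extN_apply c i j

lemma kostant_nat_iff {n h : ℕ} (c : Fin n → Fin n → ℕ) :
    IsKostant (fun _ : Fin n => h) c ↔
    ((∀ I J, I < n → J < n → J < I → extN c I J = 0) ∧
      ∀ m < n, (∑ I ∈ range n, ∑ J ∈ range n, if I ≤ m ∧ m ≤ J then extN c I J else 0) = h) := by
  rw [← isKostant_iff_nat h (extN c), extN_reshape]

lemma extN_zero {n h : ℕ} (c : Fin n → Fin n → ℕ) (hc : IsKostant (fun _ : Fin n => h) c)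
    {I J : ℕ} (hIJ : J < I ∨ n ≤ I ∨ n ≤ J) : extN c I J = 0 := by
  rw [extN]
  split_ifs with h'
  · rcases hIJ with h1 | h1 | h1
    · exact hc.1 _ _ h1
    · omega
    · omega
  · rfl

lemma idx_lt {i a q W : ℕ} (hi : i < q) (ha : a < W) : i * W + a < q * W :=
  lt_of_lt_of_le (Nat.add_lt_add_left ha _)
    (by rw [← Nat.succ_mul]; exact Nat.mul_le_mul_right W hi)

lemma idx_div {i a W : ℕ} (hW : 0 < W) (ha : a < W) : (i * W + a) / W = i := by
  rw [Nat.mul_comm, Nat.mul_add_div hW, Nat.div_eq_of_lt ha, Nat.add_zero]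

lemma idx_mod {i a W : ℕ} (ha : a < W) : (i * W + a) % W = a := by
  rw [Nat.mul_comm, Nat.mul_add_mod, Nat.mod_eq_of_lt ha]

lemma blk_lt {x y a b W : ℕ} (hxy : x < y) (ha : a < W) : x * W + a < y * W + b :=
  lt_of_lt_of_le (idx_lt hxy ha) (Nat.le_add_right _ _)

lemma blk_le_iff {x y a b W : ℕ} (ha : a < W) (hb : b < W) :
    x * W + a ≤ y * W + b ↔ (x < y ∨ (x = y ∧ a ≤ b)) := by
  constructor
  · intro hle
    rcases Nat.lt_trichotomy x y with hc | hc | hc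
    · exact Or.inl hc
    · subst hc
      exact Or.inr ⟨rfl, Nat.le_of_add_le_add_left (by rwa [Nat.add_comm (x*W) a, Nat.add_comm (x*W) b] at hle)⟩
    · exact absurd hle (Nat.not_le.mpr (blk_lt hc hb))
  · rintro (hc | ⟨rfl, hc⟩)
    · exact Nat.le_of_lt (blk_lt hc ha)
    · exact Nat.add_le_add_left hc _

lemma self_div_mod (m W : ℕ) : m = (m / W) * W + m % W := by
  rw [Nat.mul_comm]
  exact (Nat.div_add_mod m W).symm

lemma block_cond {W : ℕ} (hW : 0 < W) {iA a iB b m : ℕ} (ha : a < W) (hb : b < W) :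
    (iA * W + a ≤ m ∧ m ≤ iB * W + b) ↔
      ((iA < m / W ∨ (iA = m / W ∧ a ≤ m % W)) ∧ (m / W < iB ∨ (m / W = iB ∧ m % W ≤ b))) := by
  have hmod : m % W < W := Nat.mod_lt _ hW
  constructor
  · rintro ⟨h1, h2⟩
    rw [self_div_mod m W] at h1 h2
    exact ⟨(blk_le_iff ha hmod).mp h1, (blk_le_iff hmod hb).mp h2⟩
  · rintro ⟨h1, h2⟩
    rw [self_div_mod m W]
    exact ⟨(blk_le_iff ha hmod).mpr h1, (blk_le_iff hmod hb).mpr h2⟩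

lemma sum_if_const {P : Prop} [Decidable P] (s : Finset ℕ) (g : ℕ → ℕ) :
    (∑ x ∈ s, if P then g x else 0) = if P then ∑ x ∈ s, g x else 0 := by
  split <;> simp

instance kostant_subtype_finite {n : ℕ} (η : Fin n → ℕ) :
    Finite {c : Fin n → Fin n → ℕ // IsKostant η c} := (kostant_finite η).to_subtype

lemma KPF_pow_le (h q W : ℕ) (hW : 0 < W) :
    KPF (fun _ : Fin W => h) ^ q ≤ KPF (fun _ : Fin (q * W) => h) := by
  classical
  rw [KPF_eq_natCard, KPF_eq_natCard]
  set S := {c : Fin W → Fin W → ℕ // IsKostant (fun _ : Fin W => h) c} with hS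
  -- the gluing map
  set fN : (Fin q → S) → ℕ → ℕ → ℕ → ℕ := fun f i a b =>
    if h' : i < q then extN (f ⟨i, h'⟩).1 a b else 0 with hfN
  set EN : (Fin q → S) → ℕ → ℕ → ℕ := fun f I J =>
    if I / W = J / W then fN f (I / W) (I % W) (J % W) else 0 with hEN
  have hKost : ∀ f : Fin q → S, IsKostant (fun _ : Fin (q*W) => h) (fun I J => EN f I.1 J.1) := by
    intro f
    apply (isKostant_iff_nat h (EN f)).mpr
    constructor
    · intro I J hI hJ hlt
      rw [hEN]
      simp only
      split_ifs with hq1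
      · -- same block, J % W < I % W
        have h1 := self_div_mod I W
        have h2 := self_div_mod J W
        rw [← hq1] at h2
        have hmodlt : J % W < I % W := by
          have h3 : I % W < W := Nat.mod_lt _ hW
          have h4 : J % W < W := Nat.mod_lt _ hW
          rcases Nat.lt_trichotomy (J % W) (I % W) with hc | hc | hc
          · exact hc
          · omega
          · omega
        rw [hfN]
        simp only
        split_ifs with hq2
        · exact extN_zero _ (f ⟨I / W, hq2⟩).2 (Or.inl hmodlt)
        · rfl
      · rfl
    · intro m hm
      set i := m / W with hi
      set p := m % W with hp
      have hiq : i < q := by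
        rw [hi]
        exact Nat.div_lt_of_lt_mul (by rwa [Nat.mul_comm] at hm)
      have hpW : p < W := Nat.mod_lt _ hW
      rw [sum_range_mul_split (fun I => ∑ J ∈ range (q*W), if I ≤ m ∧ m ≤ J then EN f I J else 0) q W]
      have step1 : ∀ iA ∈ range q, ∀ a ∈ range W,
          (∑ J ∈ range (q*W), if iA*W+a ≤ m ∧ m ≤ J then EN f (iA*W+a) J else 0)
          = ∑ iB ∈ range q, ∑ b ∈ range W,
              if iA = i then (if iB = i then (if a ≤ p ∧ p ≤ b then fN f i a b else 0) else 0) else 0 := by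
        intro iA hiA a haW
        rw [sum_range_mul_split (fun J => if iA*W+a ≤ m ∧ m ≤ J then EN f (iA*W+a) J else 0) q W]
        refine Finset.sum_congr rfl fun iB hiB => Finset.sum_congr rfl fun b hbW => ?_
        rw [Finset.mem_range] at hiA haW hiB hbW
        rw [hEN]
        simp only [idx_div hW haW, idx_mod haW, idx_div hW hbW, idx_mod hbW]
        by_cases hcond : iA*W+a ≤ m ∧ m ≤ iB*W+b
        · rw [if_pos hcond]
          have := (block_cond hW haW hbW).mp hcond
          -- i.e. (iA < i ∨ (iA = i ∧ a ≤ p)) ∧ (i < iB ∨ (i = iB ∧ p ≤ b))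
          by_cases hAB : iA = iB
          · rw [if_pos hAB]
            subst hAB
            have hiAi : iA = i := by rcases this with ⟨h1 | h1, h2 | h2⟩ <;> omega
            subst hiAi
            have hap : a ≤ p ∧ p ≤ b := by rcases this with ⟨h1 | h1, h2 | h2⟩ <;> omega
            rw [if_pos rfl, if_pos rfl, if_pos hap]
          · rw [if_neg hAB]
            by_cases hA : iA = i
            · subst hA
              have : iB ≠ i := fun e => hAB e.symm
              rw [if_pos rfl, if_neg this]
            · rw [if_neg hA]
        · rw [if_neg hcond]
          rw [block_cond hW haW hbW] at hcond
          -- show RHS is 0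
          by_cases hA : iA = i
          · by_cases hB : iB = i
            · subst hA; subst hB
              have : ¬ (a ≤ p ∧ p ≤ b) := by
                intro hap
                exact hcond ⟨Or.inr ⟨rfl, hap.1⟩, Or.inr ⟨rfl, hap.2⟩⟩
              rw [if_pos rfl, if_pos rfl, if_neg this]
            · rw [if_pos hA, if_neg hB]
          · rw [if_neg hA]
      rw [Finset.sum_congr rfl (fun iA hiA => Finset.sum_congr rfl (fun a haW => step1 iA hiA a haW))]
      -- collapse iA and iB sums
      rw [Finset.sum_eq_single i]
      · simp only [eq_self_iff_true, if_true]
        have step2 : ∀ a ∈ range W,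
            (∑ iB ∈ range q, ∑ b ∈ range W,
              if iB = i then (if a ≤ p ∧ p ≤ b then fN f i a b else 0) else 0)
            = ∑ b ∈ range W, if a ≤ p ∧ p ≤ b then fN f i a b else 0 := by
          intro a _
          rw [Finset.sum_eq_single i]
          · exact Finset.sum_congr rfl fun b _ => if_pos rfl
          · intro iB _ hne
            exact Finset.sum_eq_zero fun b _ => if_neg hne
          · intro hcon; exact absurd (Finset.mem_range.mpr hiq) hcon
        rw [Finset.sum_congr rfl step2]
        -- now use the small picture's Kostant property at column p
        have hsmall := (kostant_nat_iff (f ⟨i, hiq⟩).1).mp (f ⟨i, hiq⟩).2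
        have := hsmall.2 p hpW
        rw [← this]
        refine Finset.sum_congr rfl fun a _ => Finset.sum_congr rfl fun b _ => ?_
        rw [hfN]
        simp only [dif_pos hiq]
      · intro iA _ hne
        exact Finset.sum_eq_zero fun a _ => Finset.sum_eq_zero fun iB _ =>
          Finset.sum_eq_zero fun b _ => if_neg hne
      · intro hcon; exact absurd (Finset.mem_range.mpr hiq) hcon
  -- injectivity
  set Φ : (Fin q → S) → {c : Fin (q*W) → Fin (q*W) → ℕ // IsKostant (fun _ : Fin (q*W) => h) c} :=
    fun f => ⟨fun I J => EN f I.1 J.1, hKost f⟩ with hΦ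
  have hinj : Function.Injective Φ := by
    intro f f' hff
    have hval : ∀ I J : Fin (q*W), EN f I.1 J.1 = EN f' I.1 J.1 := by
      intro I J
      have := congrArg Subtype.val hff
      exact congrFun (congrFun this I) J
    funext i
    apply Subtype.ext
    funext a b
    have hIa : i.1 * W + a.1 < q * W := idx_lt i.2 a.2
    have hIb : i.1 * W + b.1 < q * W := idx_lt i.2 b.2
    have := hval ⟨i.1 * W + a.1, hIa⟩ ⟨i.1 * W + b.1, hIb⟩
    rw [hEN] at this
    simp only [idx_div hW a.2, idx_mod a.2, idx_div hW b.2, idx_mod b.2, if_pos rfl, hfN,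
      dif_pos i.2] at this
    rw [extN, extN, dif_pos ⟨a.2, b.2⟩, dif_pos ⟨a.2, b.2⟩] at this
    simpa using this
  calc Nat.card S ^ q = Nat.card (Fin q → S) := by
        rw [Nat.card_fun, Nat.card_eq_fintype_card (α := Fin q), Fintype.card_fin]
    _ ≤ _ := Nat.card_le_card_of_injective Φ hinj

lemma kbound (W : ℕ) : (W ^ 2 + 3) / 4 ≤ (W / 2 + 1) * (W - W / 2) := by
  obtain ⟨u, r, hr, hWu⟩ : ∃ u r, r < 2 ∧ W = 2 * u + r :=
    ⟨W / 2, W % 2, Nat.mod_lt _ (by omega), by omega⟩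
  subst hWu
  have hdiv : (2 * u + r) / 2 = u := by omega
  rw [hdiv]
  interval_cases r
  · have h1 : (2 * u + 0) ^ 2 = 4 * (u * u) := by ring
    have h2 : (u + 1) * (2 * u + 0 - u) = u * u + u := by
      have : 2 * u + 0 - u = u := by omega
      rw [this]; ring
    rw [h1, h2]
    omega
  · have h1 : (2 * u + 1) ^ 2 = 4 * (u * u) + 4 * u + 1 := by ring
    have h2 : (u + 1) * (2 * u + 1 - u) = u * u + 2 * u + 1 := by
      have : 2 * u + 1 - u = u + 1 := by omega
      rw [this]; ring
    rw [h1, h2]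
    omega

def encA (W t : ℕ) : ℕ := t % (W / 2 + 1)
def encB (W t : ℕ) : ℕ := W / 2 + t / (W / 2 + 1)

lemma encA_le (W t : ℕ) : encA W t ≤ W / 2 :=
  Nat.lt_succ_iff.mp (Nat.mod_lt _ (Nat.succ_pos _))

lemma encB_ge (W t : ℕ) : W / 2 ≤ encB W t := Nat.le_add_right _ _

lemma encB_lt (W t : ℕ) (hW : 0 < W) (ht : t < (W ^ 2 + 3) / 4) : encB W t < W := by
  have h1 : t < (W / 2 + 1) * (W - W / 2) := lt_of_lt_of_le ht (kbound W)
  have h2 : t / (W / 2 + 1) < W - W / 2 :=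
    Nat.div_lt_iff_lt_mul (Nat.succ_pos _) |>.mpr (by rwa [Nat.mul_comm] at h1)
  have h3 : W / 2 ≤ W := Nat.div_le_self _ _
  rw [encB]
  omega

lemma enc_inj {W t t' : ℕ} (hA : encA W t = encA W t') (hB : encB W t = encB W t') : t = t' := by
  rw [encA, encA] at hA
  rw [encB, encB] at hB
  have hdiv : t / (W / 2 + 1) = t' / (W / 2 + 1) :=
    Nat.add_left_cancel hB
  have e1 := Nat.div_add_mod t (W / 2 + 1)
  have e2 := Nat.div_add_mod t' (W / 2 + 1)
  rw [hdiv, hA] at e1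
  omega

lemma encA_lt (W t : ℕ) (hW : 0 < W) : encA W t < W := by
  have h1 := encA_le W t
  have h2 : W / 2 < W := Nat.div_lt_self hW (by omega)
  omega

lemma kpos (W : ℕ) (hW : 0 < W) : 0 < (W ^ 2 + 3) / 4 := by
  have h1 : 1 ≤ W ^ 2 := Nat.one_le_pow _ _ hW
  omega

def coloredN (W k : ℕ) (FN : ℕ → ℕ → ℕ → ℕ) (A B : ℕ) : ℕ :=
  ∑ t ∈ range k, if A % W = encA W t ∧ B % W = encB W t then FN (A / W) (B / W) t else 0

def covN (q W k : ℕ) (FN : ℕ → ℕ → ℕ → ℕ) (I : ℕ) : ℕ :=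
  ∑ X ∈ range (q * W), ∑ Y ∈ range (q * W), if X ≤ I ∧ I ≤ Y then coloredN W k FN X Y else 0

def ENc (h q W k : ℕ) (FN : ℕ → ℕ → ℕ → ℕ) (I J : ℕ) : ℕ :=
  coloredN W k FN I J + (if I = J ∧ I % W ≠ W / 2 then h - covN q W k FN I else 0)

lemma covkey (q W k : ℕ) (hW : 0 < W) (hkb : k ≤ (W ^ 2 + 3) / 4)
    (FN : ℕ → ℕ → ℕ → ℕ) (m : ℕ) :
    covN q W k FN m = ∑ t ∈ range k, ∑ iA ∈ range q, ∑ iB ∈ range q,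
      if iA * W + encA W t ≤ m ∧ m ≤ iB * W + encB W t then FN iA iB t else 0 := by
  rw [covN]
  -- push the outer condition into the t-sum
  have stepA : ∀ X Y : ℕ,
      (if X ≤ m ∧ m ≤ Y then coloredN W k FN X Y else 0)
      = ∑ t ∈ range k, if X ≤ m ∧ m ≤ Y then
          (if X % W = encA W t ∧ Y % W = encB W t then FN (X / W) (Y / W) t else 0) else 0 := by
    intro X Y
    rw [sum_if_const]
    rw [coloredN]
  rw [Finset.sum_congr rfl fun X _ => Finset.sum_congr rfl fun Y _ => stepA X Y]
  -- commute sums so that t is outermost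
  rw [Finset.sum_congr rfl fun X _ => Finset.sum_comm]
  rw [Finset.sum_comm]
  -- split X and Y sums into blocks
  refine Finset.sum_congr rfl fun t ht => ?_
  rw [Finset.mem_range] at ht
  have htk : t < (W ^ 2 + 3) / 4 := lt_of_lt_of_le ht hkb
  have hAlt : encA W t < W := encA_lt W t hW
  have hBlt : encB W t < W := encB_lt W t hW htk
  rw [sum_range_mul_split (fun X => ∑ Y ∈ range (q*W),
    if X ≤ m ∧ m ≤ Y then (if X % W = encA W t ∧ Y % W = encB W t
      then FN (X / W) (Y / W) t else 0) else 0) q W]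
  refine Finset.sum_congr rfl fun iA _ => ?_
  -- collapse the a-sum at encA W t
  rw [Finset.sum_eq_single (encA W t)]
  · -- now split the Y sum
    rw [sum_range_mul_split (fun Y => if iA * W + encA W t ≤ m ∧ m ≤ Y then
        (if (iA * W + encA W t) % W = encA W t ∧ Y % W = encB W t
          then FN ((iA * W + encA W t) / W) (Y / W) t else 0) else 0) q W]
    refine Finset.sum_congr rfl fun iB _ => ?_
    rw [Finset.sum_eq_single (encB W t)]
    · simp only [idx_div hW hAlt, idx_mod hAlt, idx_div hW hBlt, idx_mod hBlt,
        and_true, eq_self_iff_true, if_true]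
    · intro b hb hbne
      rw [idx_mod (Finset.mem_range.mp hb)]
      rw [if_neg (fun hcon : _ ∧ b = encB W t => hbne hcon.2)]
      exact ite_self 0
    · intro hcon
      exact absurd (Finset.mem_range.mpr hBlt) hcon
  · intro a ha hane
    apply Finset.sum_eq_zero
    intro Y _
    rw [idx_mod (Finset.mem_range.mp ha)]
    rw [if_neg (fun hcon : a = encA W t ∧ _ => hane hcon.1)]
    exact ite_self 0
  · intro hcon
    exact absurd (Finset.mem_range.mpr hAlt) hcon

lemma cov_mid {h q W k : ℕ} (hW : 0 < W) (hkb : k ≤ (W ^ 2 + 3) / 4)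
    {c : Fin q → Fin q → ℕ} {FN : ℕ → ℕ → ℕ → ℕ}
    (hc : IsKostant (fun _ : Fin q => h) c)
    (hyp2 : ∀ i j, (∑ t ∈ range k, FN i j t) = extN c i j)
    {m : ℕ} (hm : m < q * W) (hmid : m % W = W / 2) :
    covN q W k FN m = h := by
  have hiq : m / W < q := Nat.div_lt_of_lt_mul (by rwa [Nat.mul_comm] at hm)
  rw [covkey q W k hW hkb FN m]
  have step : ∀ t ∈ range k, ∀ iA ∈ range q, ∀ iB ∈ range q,
      (if iA * W + encA W t ≤ m ∧ m ≤ iB * W + encB W t then FN iA iB t else 0)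
      = if iA ≤ m / W ∧ m / W ≤ iB then FN iA iB t else 0 := by
    intro t ht iA _ iB _
    rw [Finset.mem_range] at ht
    have htk : t < (W ^ 2 + 3) / 4 := lt_of_lt_of_le ht hkb
    have hA := encA_le W t
    have hB := encB_ge W t
    have hBlt := encB_lt W t hW htk
    have hAlt := encA_lt W t hW
    refine if_congr ((block_cond hW hAlt hBlt).trans (by omega)) rfl rfl
  rw [Finset.sum_congr rfl fun t ht => Finset.sum_congr rfl fun iA hiA =>
    Finset.sum_congr rfl fun iB hiB => step t ht iA hiA iB hiB]
  -- move t-sum inside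
  rw [Finset.sum_comm]
  rw [Finset.sum_congr rfl fun iA _ => Finset.sum_comm]
  have step2 : ∀ iA ∈ range q, ∀ iB ∈ range q,
      (∑ t ∈ range k, if iA ≤ m / W ∧ m / W ≤ iB then FN iA iB t else 0)
      = if iA ≤ m / W ∧ m / W ≤ iB then extN c iA iB else 0 := by
    intro iA _ iB _
    rw [sum_if_const, hyp2]
  rw [Finset.sum_congr rfl fun iA hiA => Finset.sum_congr rfl fun iB hiB => step2 iA hiA iB hiB]
  exact ((kostant_nat_iff c).mp hc).2 (m / W) hiq

lemma cov_le {h q W k : ℕ} (hW : 0 < W) (hkb : k ≤ (W ^ 2 + 3) / 4)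
    {c : Fin q → Fin q → ℕ} {FN : ℕ → ℕ → ℕ → ℕ}
    (hc : IsKostant (fun _ : Fin q => h) c)
    (hyp2 : ∀ i j, (∑ t ∈ range k, FN i j t) = extN c i j)
    {m : ℕ} (hm : m < q * W) : covN q W k FN m ≤ h := by
  have hiq : m / W < q := Nat.div_lt_of_lt_mul (by rwa [Nat.mul_comm] at hm)
  have hm0W : W / 2 < W := Nat.div_lt_self hW (by omega)
  have hm' : m / W * W + W / 2 < q * W := idx_lt hiq hm0W
  have hmod' : (m / W * W + W / 2) % W = W / 2 := idx_mod hm0W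
  have hdiv' : (m / W * W + W / 2) / W = m / W := idx_div hW hm0W
  calc covN q W k FN m ≤ covN q W k FN (m / W * W + W / 2) := by
        rw [covkey q W k hW hkb FN m, covkey q W k hW hkb FN (m / W * W + W / 2)]
        refine Finset.sum_le_sum fun t ht => Finset.sum_le_sum fun iA _ =>
          Finset.sum_le_sum fun iB _ => ?_
        rw [Finset.mem_range] at ht
        have htk : t < (W ^ 2 + 3) / 4 := lt_of_lt_of_le ht hkb
        have hA := encA_le W t
        have hB := encB_ge W t
        have hBlt := encB_lt W t hW htk
        have hAlt := encA_lt W t hW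
        have e1 := block_cond (iA := iA) (a := encA W t) (iB := iB) (b := encB W t)
          (m := m) hW hAlt hBlt
        have e2 := block_cond (iA := iA) (a := encA W t) (iB := iB) (b := encB W t)
          (m := m / W * W + W / 2) hW hAlt hBlt
        rw [hmod', hdiv'] at e2
        by_cases hcond : iA * W + encA W t ≤ m ∧ m ≤ iB * W + encB W t
        · rw [if_pos hcond, if_pos (e2.mpr (by have := e1.mp hcond; omega))]
        · rw [if_neg hcond]
          exact Nat.zero_le _
    _ = h := cov_mid hW hkb hc hyp2 hm' hmod'

lemma ENc_kostant {h q W k : ℕ} (hW : 0 < W) (hkb : k ≤ (W ^ 2 + 3) / 4)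
    {c : Fin q → Fin q → ℕ} (hc : IsKostant (fun _ : Fin q => h) c) {FN : ℕ → ℕ → ℕ → ℕ}
    (hyp1 : ∀ i j t, j < i → FN i j t = 0)
    (hyp2 : ∀ i j, (∑ t ∈ range k, FN i j t) = extN c i j) :
    IsKostant (fun _ : Fin (q * W) => h) (fun I J => ENc h q W k FN I.1 J.1) := by
  apply (isKostant_iff_nat h (ENc h q W k FN)).mpr
  constructor
  · intro I J hI hJ hlt
    rw [ENc]
    have hne : ¬(I = J ∧ I % W ≠ W / 2) := fun hcon => by omega
    rw [if_neg hne, Nat.add_zero, coloredN]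
    apply Finset.sum_eq_zero
    intro t _
    have hdle : J / W ≤ I / W := Nat.div_le_div_right (le_of_lt hlt)
    rcases Nat.lt_or_ge (J / W) (I / W) with hdlt | hdge
    · rw [hyp1 _ _ _ hdlt]
      exact ite_self 0
    · have hdeq : I / W = J / W := le_antisymm hdge hdle
      have h1 := self_div_mod I W
      have h2 := self_div_mod J W
      rw [← hdeq] at h2
      have hmlt : J % W < I % W := by omega
      by_cases hcond : I % W = encA W t ∧ J % W = encB W t
      · exfalso
        have hA := encA_le W t
        have hB := encB_ge W t
        omega
      · rw [if_neg hcond]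
  · intro m hm
    have hsplit : ∀ I J : ℕ, (if I ≤ m ∧ m ≤ J then ENc h q W k FN I J else 0)
        = (if I ≤ m ∧ m ≤ J then coloredN W k FN I J else 0)
          + (if I ≤ m ∧ m ≤ J then
              (if I = J ∧ I % W ≠ W / 2 then h - covN q W k FN I else 0) else 0) := by
      intro I J
      rw [ENc]
      split <;> simp
    rw [Finset.sum_congr rfl fun I _ => Finset.sum_congr rfl fun J _ => hsplit I J]
    simp only [Finset.sum_add_distrib]
    have hcov : (∑ I ∈ range (q*W), ∑ J ∈ range (q*W),
        if I ≤ m ∧ m ≤ J then coloredN W k FN I J else 0) = covN q W k FN m := rfl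
    rw [hcov]
    have hfill : ∀ I ∈ range (q*W), ∀ J ∈ range (q*W),
        (if I ≤ m ∧ m ≤ J then (if I = J ∧ I % W ≠ W / 2 then h - covN q W k FN I else 0) else 0)
        = if I = m then (if J = m then
            (if m % W ≠ W / 2 then h - covN q W k FN m else 0) else 0) else 0 := by
      intro I _ J _
      by_cases hI : I = m
      · subst hI
        rw [if_pos rfl]
        by_cases hJ : J = I
        · subst hJ
          rw [if_pos rfl, if_pos ⟨le_refl J, le_refl J⟩]
          by_cases hmod : J % W ≠ W / 2
          · rw [if_pos ⟨rfl, hmod⟩, if_pos hmod]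
          · rw [if_neg (fun hcon => hmod hcon.2), if_neg hmod]
        · rw [if_neg hJ]
          by_cases hP : I ≤ I ∧ I ≤ J
          · rw [if_pos hP, if_neg (fun hcon : I = J ∧ _ => hJ hcon.1.symm)]
          · rw [if_neg hP]
      · rw [if_neg hI]
        by_cases hP : I ≤ m ∧ m ≤ J
        · rw [if_pos hP, if_neg (fun hcon : I = J ∧ _ =>
            hI (le_antisymm hP.1 (hcon.1 ▸ hP.2)))]
        · rw [if_neg hP]
    rw [Finset.sum_congr rfl fun I hI => Finset.sum_congr rfl fun J hJ => hfill I hI J hJ]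
    rw [Finset.sum_eq_single m]
    · simp only [eq_self_iff_true, if_true]
      rw [Finset.sum_ite_eq' (range (q*W)) m
        (fun _ => if m % W ≠ W / 2 then h - covN q W k FN m else 0)]
      rw [if_pos (Finset.mem_range.mpr hm)]
      by_cases hmid : m % W = W / 2
      · rw [if_neg (fun hcon => hcon hmid), Nat.add_zero]
        exact cov_mid hW hkb hc hyp2 hm hmid
      · rw [if_pos hmid]
        have h1 := cov_le hW hkb hc hyp2 hm
        omega
    · intro I _ hne
      exact Finset.sum_eq_zero fun J _ => if_neg hne
    · intro hcon
      exact absurd (Finset.mem_range.mpr hm) hcon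


private noncomputable def msE (k : ℕ) : (Fin k → ℕ) ≃ Multiset (Fin k) :=
  (Finsupp.equivFunOnFinite.symm).trans Multiset.toFinsupp.symm.toEquiv

private lemma msE_card (k : ℕ) (g : Fin k → ℕ) : Multiset.card (msE k g) = ∑ i, g i := by
  have h1 : ∀ a : Fin k, Multiset.count a (msE k g) = g a := by
    intro a
    show Multiset.count a (Multiset.toFinsupp.symm (Finsupp.equivFunOnFinite.symm g)) = g a
    rw [← Multiset.toFinsupp_apply]
    simp
  rw [← Multiset.toFinset_sum_count_eq (msE k g),
    Finset.sum_subset (Finset.subset_univ _)]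
  · exact Finset.sum_congr rfl fun a _ => h1 a
  · intro a _ ha
    rw [Multiset.count_eq_zero_of_notMem]
    simpa using ha

lemma card_sum_fiber (k n : ℕ) (hk : 1 ≤ k) :
    Nat.card {g : Fin k → ℕ // ∑ i, g i = n} = (n + k - 1).choose (k - 1) := by
  have e2 : {g : Fin k → ℕ // ∑ i, g i = n} ≃ Sym (Fin k) n :=
    Equiv.subtypeEquiv (msE k) (fun g => by rw [msE_card])
  rw [Nat.card_congr e2, Nat.card_eq_fintype_card, Sym.card_sym_eq_choose, Fintype.card_fin]
  have h1 : k + n - 1 = n + k - 1 := by omega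
  rw [h1, ← Nat.choose_symm (by omega : n ≤ n + k - 1)]
  congr 1
  omega

lemma prod_choose_le_KPF (h q W : ℕ) (hW : 0 < W)
    (c : Fin q → Fin q → ℕ) (hc : IsKostant (fun _ : Fin q => h) c) :
    (∏ i : Fin q, ∏ j : Fin q,
      if i ≤ j then (c i j + (W ^ 2 + 3) / 4 - 1).choose ((W ^ 2 + 3) / 4 - 1) else 1)
      ≤ KPF (fun _ : Fin (q * W) => h) := by
  classical
  set k := (W ^ 2 + 3) / 4 with hkdef
  have hk : 0 < k := kpos W hW
  have hkb : k ≤ (W ^ 2 + 3) / 4 := le_refl _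
  -- the type of decompositions
  set D := {F : Fin q → Fin q → Fin k → ℕ // ∀ i j, (∑ t, F i j t) = c i j} with hD
  -- counting D
  have hcardD : Nat.card D = ∏ i : Fin q, ∏ j : Fin q,
      (c i j + k - 1).choose (k - 1) := by
    have e1 : D ≃ ∀ i : Fin q, {Fi : Fin q → Fin k → ℕ // ∀ j, (∑ t, Fi j t) = c i j} :=
      Equiv.subtypePiEquivPi (β := fun _ : Fin q => Fin q → Fin k → ℕ) (p := fun i Fi => ∀ j, (∑ t, Fi j t) = c i j)
    have e2 : ∀ i : Fin q,
        {Fi : Fin q → Fin k → ℕ // ∀ j, (∑ t, Fi j t) = c i j}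
          ≃ ∀ j : Fin q, {g : Fin k → ℕ // (∑ t, g t) = c i j} :=
      fun i => Equiv.subtypePiEquivPi (β := fun _ : Fin q => Fin k → ℕ) (p := fun j g => (∑ t, g t) = c i j)
    rw [Nat.card_congr (e1.trans (Equiv.piCongrRight e2))]
    rw [Nat.card_pi]
    refine Finset.prod_congr rfl fun i _ => ?_
    rw [Nat.card_pi]
    exact Finset.prod_congr rfl fun j _ => card_sum_fiber k (c i j) hk
  -- the LHS equals Nat.card D
  have hLHS : (∏ i : Fin q, ∏ j : Fin q,
      if i ≤ j then (c i j + k - 1).choose (k - 1) else 1) = Nat.card D := by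
    rw [hcardD]
    refine Finset.prod_congr rfl fun i _ => Finset.prod_congr rfl fun j _ => ?_
    by_cases hij : i ≤ j
    · rw [if_pos hij]
    · rw [if_neg hij, hc.1 i j (lt_of_not_ge hij), Nat.zero_add, Nat.choose_self]
  rw [hLHS, KPF_eq_natCard]
  -- the injection
  set FNf : D → ℕ → ℕ → ℕ → ℕ := fun F i j t =>
    if h' : i < q ∧ j < q ∧ t < k then F.1 ⟨i, h'.1⟩ ⟨j, h'.2.1⟩ ⟨t, h'.2.2⟩ else 0 with hFNf
  have hyp1 : ∀ F : D, ∀ i j t, j < i → FNf F i j t = 0 := by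
    intro F i j t hji
    rw [hFNf]
    simp only
    split_ifs with h'
    · have hz : c ⟨i, h'.1⟩ ⟨j, h'.2.1⟩ = 0 := hc.1 _ _ hji
      have hsum := F.2 ⟨i, h'.1⟩ ⟨j, h'.2.1⟩
      rw [hz] at hsum
      exact (Finset.sum_eq_zero_iff.mp hsum) ⟨t, h'.2.2⟩ (Finset.mem_univ _)
    · rfl
  have hyp2 : ∀ F : D, ∀ i j, (∑ t ∈ range k, FNf F i j t) = extN c i j := by
    intro F i j
    by_cases hb : i < q ∧ j < q
    · rw [extN, dif_pos hb]
      rw [← F.2 ⟨i, hb.1⟩ ⟨j, hb.2⟩]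
      rw [← Fin.sum_univ_eq_sum_range (fun t => FNf F i j t) k]
      refine Finset.sum_congr rfl fun t _ => ?_
      rw [hFNf]
      simp only
      rw [dif_pos (show i < q ∧ j < q ∧ t.1 < k from ⟨hb.1, hb.2, t.2⟩)]
    · rw [extN, dif_neg hb]
      apply Finset.sum_eq_zero
      intro t ht
      rw [hFNf]
      simp only
      rw [dif_neg (fun hcon => hb ⟨hcon.1, hcon.2.1⟩)]
  set Ψ : D → {e : Fin (q*W) → Fin (q*W) → ℕ // IsKostant (fun _ : Fin (q*W) => h) e} :=
    fun F => ⟨fun I J => ENc h q W k (FNf F) I.1 J.1,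
      ENc_kostant hW hkb hc (hyp1 F) (hyp2 F)⟩ with hΨ
  have hinj : Function.Injective Ψ := by
    intro F F' hFF
    have hval : ∀ I J : Fin (q*W), ENc h q W k (FNf F) I.1 J.1 = ENc h q W k (FNf F') I.1 J.1 :=
      fun I J => congrFun (congrFun (congrArg Subtype.val hFF) I) J
    apply Subtype.ext
    funext i j t
    have htk : t.1 < (W ^ 2 + 3) / 4 := lt_of_lt_of_le t.2 hkb
    have hAlt : encA W t.1 < W := encA_lt W t.1 hW
    have hBlt : encB W t.1 < W := encB_lt W t.1 hW htk
    have hIA : i.1 * W + encA W t.1 < q * W := idx_lt i.2 hAlt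
    have hIB : j.1 * W + encB W t.1 < q * W := idx_lt j.2 hBlt
    have key : ∀ G : D, ENc h q W k (FNf G) (i.1 * W + encA W t.1) (j.1 * W + encB W t.1)
        = G.1 i j t := by
      intro G
      rw [ENc]
      have hfil : ¬((i.1 * W + encA W t.1) = (j.1 * W + encB W t.1)
          ∧ (i.1 * W + encA W t.1) % W ≠ W / 2) := by
        rintro ⟨heq, hmod⟩
        apply hmod
        rw [idx_mod hAlt]
        have hdiv : i.1 = j.1 := by
          have := congrArg (· / W) heq
          simpa [idx_div hW hAlt, idx_div hW hBlt] using this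
        have hmodeq : encA W t.1 = encB W t.1 := by
          have := congrArg (· % W) heq
          simpa [idx_mod hAlt, idx_mod hBlt] using this
        have h1 := encA_le W t.1
        have h2 := encB_ge W t.1
        omega
      rw [if_neg hfil, Nat.add_zero, coloredN]
      rw [Finset.sum_eq_single t.1]
      · rw [idx_mod hAlt, idx_mod hBlt, idx_div hW hAlt, idx_div hW hBlt,
          if_pos ⟨rfl, rfl⟩]
        rw [hFNf]
        simp only
        rw [dif_pos (show i.1 < q ∧ j.1 < q ∧ t.1 < k from ⟨i.2, j.2, t.2⟩)]
      · intro t' _ htne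
        rw [idx_mod hAlt, idx_mod hBlt]
        rw [if_neg (fun hcon : _ ∧ _ => htne (enc_inj hcon.1 hcon.2).symm)]
      · intro hcon
        exact absurd (Finset.mem_range.mpr t.2) hcon
    have := (key F).symm.trans ((hval ⟨_, hIA⟩ ⟨_, hIB⟩).trans (key F'))
    exact this
  exact Nat.card_le_card_of_injective Ψ hinj

/-- `L[h,w] = ln KPF[(h,…,h)]` for the constant tuple of length `w`. -/
noncomputable def Lbox (h w : ℕ) : ℝ := Real.log (KPF (fun _ : Fin w => h))

/-- `T^k[η]`: the maximal number of `k`-colorings of a Kostant picture of height `η`,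
where a picture `c` has `∏_{i ≤ j} C(c i j + k - 1, k - 1)` colorings. -/
noncomputable def Tcol {w : ℕ} (k : ℕ) (η : Fin w → ℕ) : ℕ :=
  sSup ((fun c : Fin w → Fin w → ℕ =>
      ∏ i : Fin w, ∏ j : Fin w,
        (if i ≤ j then Nat.choose (c i j + k - 1) (k - 1) else 1)) ''
    {c : Fin w → Fin w → ℕ | IsKostant η c})

/-- `L^k[h,w] = ln T^k[(h,…,h)]` for the constant tuple of length `w`. -/
noncomputable def Lcol (k h w : ℕ) : ℝ := Real.log (Tcol k (fun _ : Fin w => h))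

lemma Tcol_le_KPF (h q W : ℕ) (hW : 0 < W) :
    Tcol ((W ^ 2 + 3) / 4) (fun _ : Fin q => h) ≤ KPF (fun _ : Fin (q * W) => h) := by
  rw [Tcol]
  apply csSup_le
  · exact ⟨_, Set.mem_image_of_mem _ (diag_isKostant (fun _ : Fin q => h))⟩
  · rintro x ⟨c, hcmem, rfl⟩
    exact prod_choose_le_KPF h q W hW c hcmem

lemma one_le_Tcol (h q W : ℕ) (hW : 0 < W) :
    1 ≤ Tcol ((W ^ 2 + 3) / 4) (fun _ : Fin q => h) := by
  rw [Tcol]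
  have hbdd : BddAbove ((fun c : Fin q → Fin q → ℕ =>
      ∏ i : Fin q, ∏ j : Fin q,
        (if i ≤ j then Nat.choose (c i j + (W ^ 2 + 3) / 4 - 1) ((W ^ 2 + 3) / 4 - 1) else 1)) ''
      {c : Fin q → Fin q → ℕ | IsKostant (fun _ => h) c}) := by
    refine ⟨KPF (fun _ : Fin (q * W) => h), ?_⟩
    rintro x ⟨c, hcmem, rfl⟩
    exact prod_choose_le_KPF h q W hW c hcmem
  refine le_trans ?_ (le_csSup hbdd (Set.mem_image_of_mem _ (diag_isKostant _)))
  refine Finset.one_le_prod' fun i _ => Finset.one_le_prod' fun j _ => ?_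
  split
  · exact Nat.succ_le_of_lt (Nat.choose_pos (by omega))
  · exact le_refl 1

lemma limsup_le_one_aux {u : ℕ → ℝ} (h : ∀ᶠ n in Filter.atTop, 0 ≤ u n ∧ u n ≤ 1) :
    Filter.limsup u Filter.atTop ≤ 1 :=
  Filter.limsup_le_of_le
    (Filter.isCoboundedUnder_le_of_eventually_le Filter.atTop (h.mono fun _ hn => hn.1))
    (h.mono fun _ hn => hn.2)

/-- Lower bound in the decomposition proposition: if `w₀ ≻ w ≻ 1` (with `w ∣ w₀`) then
`max((w₀/w)·L[h,w], L^{⌈w²/4⌉}[h, w₀/w]) ≾ L[h, w₀]`, i.e. each of the two limsups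
of ratios is at most `1`. -/
theorem decomposition_lower (h w w₀ : ℕ → ℕ)
    (hh : ∀ n, 0 < h n) (hwpos : ∀ n, 0 < w n) (hw₀pos : ∀ n, 0 < w₀ n)
    (hdvd : ∀ n, w n ∣ w₀ n)
    (hw1 : Tendsto (fun n => (1 : ℝ) / w n) atTop (nhds 0))
    (hww₀ : Tendsto (fun n => (w n : ℝ) / w₀ n) atTop (nhds 0)) :
    Filter.limsup (fun n =>
        ((w₀ n / w n : ℕ) : ℝ) * Lbox (h n) (w n) / Lbox (h n) (w₀ n)) atTop ≤ 1 ∧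
    Filter.limsup (fun n =>
        Lcol ((w n ^ 2 + 3) / 4) (h n) (w₀ n / w n) / Lbox (h n) (w₀ n)) atTop ≤ 1 := by

  have hev : ∀ᶠ n in Filter.atTop, 2 * w n < w₀ n := by
    have h2 := hww₀.eventually_lt_const (show (0:ℝ) < 1/2 by norm_num)
    filter_upwards [h2] with n hn
    have hw0 : (0:ℝ) < w₀ n := by exact_mod_cast hw₀pos n
    rw [div_lt_iff₀ hw0] at hn
    have hcast : ((2 * w n : ℕ) : ℝ) < ((w₀ n : ℕ) : ℝ) := by push_cast; linarith
    exact_mod_cast hcast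
  have key : ∀ᶠ n in Filter.atTop,
      (0 ≤ ((w₀ n / w n : ℕ) : ℝ) * Lbox (h n) (w n) / Lbox (h n) (w₀ n) ∧
        ((w₀ n / w n : ℕ) : ℝ) * Lbox (h n) (w n) / Lbox (h n) (w₀ n) ≤ 1) ∧
      (0 ≤ Lcol ((w n ^ 2 + 3) / 4) (h n) (w₀ n / w n) / Lbox (h n) (w₀ n) ∧
        Lcol ((w n ^ 2 + 3) / 4) (h n) (w₀ n / w n) / Lbox (h n) (w₀ n) ≤ 1) := by
    filter_upwards [hev] with n hn
    have hW : 0 < w n := hwpos n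
    have hmul : (w₀ n / w n) * w n = w₀ n := Nat.div_mul_cancel (hdvd n)
    have hw₀2 : 2 ≤ w₀ n := by omega
    have hKA : 1 ≤ KPF (fun _ : Fin (w n) => h n) := KPF_pos _
    have hKB2 : 2 ≤ KPF (fun _ : Fin (w₀ n) => h n) := KPF_two (h n) (hh n) hw₀2
    have hKB1 : (1:ℕ) ≤ KPF (fun _ : Fin (w₀ n) => h n) := le_trans (by norm_num) hKB2
    have hpow : KPF (fun _ : Fin (w n) => h n) ^ (w₀ n / w n)
        ≤ KPF (fun _ : Fin (w₀ n) => h n) := by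
      have := KPF_pow_le (h n) (w₀ n / w n) (w n) hW
      rwa [hmul] at this
    have hLBpos : 0 < Lbox (h n) (w₀ n) := by
      rw [Lbox]
      apply Real.log_pos
      exact_mod_cast hKB2
    have hA1 : ((w₀ n / w n : ℕ) : ℝ) * Lbox (h n) (w n) ≤ Lbox (h n) (w₀ n) := by
      rw [Lbox, Lbox, ← Real.log_pow]
      apply Real.log_le_log
      · have : (0:ℝ) < (KPF (fun _ : Fin (w n) => h n) : ℝ) := by exact_mod_cast hKA
        positivity
      · exact_mod_cast hpow
    have hA0 : 0 ≤ ((w₀ n / w n : ℕ) : ℝ) * Lbox (h n) (w n) := by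
      apply mul_nonneg (Nat.cast_nonneg _)
      rw [Lbox]
      apply Real.log_nonneg
      exact_mod_cast hKA
    have hT1 : 1 ≤ Tcol ((w n ^ 2 + 3) / 4) (fun _ : Fin (w₀ n / w n) => h n) :=
      one_le_Tcol (h n) (w₀ n / w n) (w n) hW
    have hTle : Tcol ((w n ^ 2 + 3) / 4) (fun _ : Fin (w₀ n / w n) => h n)
        ≤ KPF (fun _ : Fin (w₀ n) => h n) := by
      have := Tcol_le_KPF (h n) (w₀ n / w n) (w n) hW
      rwa [hmul] at this
    have hB1 : Lcol ((w n ^ 2 + 3) / 4) (h n) (w₀ n / w n) ≤ Lbox (h n) (w₀ n) := by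
      rw [Lcol, Lbox]
      apply Real.log_le_log
      · exact_mod_cast hT1
      · exact_mod_cast hTle
    have hB0 : 0 ≤ Lcol ((w n ^ 2 + 3) / 4) (h n) (w₀ n / w n) := by
      rw [Lcol]
      apply Real.log_nonneg
      exact_mod_cast hT1
    exact ⟨⟨div_nonneg hA0 (le_of_lt hLBpos), (div_le_one hLBpos).mpr hA1⟩,
      ⟨div_nonneg hB0 (le_of_lt hLBpos), (div_le_one hLBpos).mpr hB1⟩⟩
  exact ⟨limsup_le_one_aux (key.mono fun n hn => hn.1),
    limsup_le_one_aux (key.mono fun n hn => hn.2)⟩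
end

section
/- Let h, w, k : ℤ⁺ → ℤ⁺ with k ≻ 1. If h ≺ k, then L^k[h, w] ≍ h·w·ln(k/h); that is, there exist constants 0 < a ≤ b with a·h(n)·w(n)·ln(k(n)/h(n)) ≤ L^{k(n)}[h(n), w(n)] ≤ b·h(n)·w(n)·ln(k(n)/h(n)) for all large n. -/
/-!
The lower bound comes from the diagonal picture, whose `h` loops per column all have length one:
it has `C(h + k - 1, h) ^ w ≥ (k / h) ^ (h w)` colorings.

For the upper bound, `c` loops of a type of length `ℓ` contribute
`log C(c + k - 1, c) ≤ c (log (k / h) + 2) + c log (h / c)`, and the entropy term is traded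
against the length: `c log (h / c) ≤ c ℓ + h e^(-ℓ)`. Summed over a picture, `∑ c ℓ = h w` since
every one of the `w` columns has height `h`, and `∑_ℓ e^(-ℓ) ≤ 1` along each row, so
`L^k[h, w] ≤ h w (log (k / h) + 4)`, which is at most `5 h w log (k / h)` once `k ≥ e h`.
-/

open Filter

open Finset Real

section Kostant

variable {w : ℕ} {η : Fin w → ℕ} {c : Fin w → Fin w → ℕ}

def numColorings (k : ℕ) (c : Fin w → Fin w → ℕ) : ℕ :=
  ∏ i, ∏ j, if i ≤ j then (c i j + k - 1).choose (k - 1) else 1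

theorem Tcol_eq_sSup (k : ℕ) (η : Fin w → ℕ) :
    Tcol k η = sSup (numColorings k '' {c | IsKostant η c}) :=
  rfl

theorem IsKostant.apply_le (hc : IsKostant η c) {i j : Fin w} (hij : i ≤ j) : c i j ≤ η i := by
  rw [← hc.2 i]
  calc c i j = if i ≤ i ∧ i ≤ j then c i j else 0 := by simp [hij]
    _ ≤ ∑ j', if i ≤ i ∧ i ≤ j' then c i j' else 0 :=
      single_le_sum (f := fun j' => if i ≤ i ∧ i ≤ j' then c i j' else 0)
        (fun _ _ => Nat.zero_le _) (mem_univ j)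
    _ ≤ ∑ i', ∑ j', if i' ≤ i ∧ i ≤ j' then c i' j' else 0 :=
      single_le_sum (f := fun i' => ∑ j', if i' ≤ i ∧ i ≤ j' then c i' j' else 0)
        (fun _ _ => Nat.zero_le _) (mem_univ i)

theorem IsKostant.sum_mul_length (hc : IsKostant η c) :
    ∑ i, ∑ j, c i j * (j + 1 - i : ℕ) = ∑ m, η m := by
  calc ∑ i, ∑ j, c i j * (j + 1 - i : ℕ)
      = ∑ i, ∑ j, ∑ m, if i ≤ m ∧ m ≤ j then c i j else 0 := by
        refine sum_congr rfl fun i _ => sum_congr rfl fun j _ => ?_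
        rw [← sum_filter, sum_const, smul_eq_mul, mul_comm, ← Fin.card_Icc]
        congr 2
        ext
        simp
    _ = ∑ i, ∑ m, ∑ j, if i ≤ m ∧ m ≤ j then c i j else 0 :=
        sum_congr rfl fun i _ => sum_comm
    _ = ∑ m, η m := by
        rw [sum_comm]
        exact sum_congr rfl fun m _ => hc.2 m

theorem IsKostant.sum_le (hc : IsKostant η c) : ∑ i, ∑ j, c i j ≤ ∑ m, η m := by
  rw [← hc.sum_mul_length]
  refine sum_le_sum fun i _ => sum_le_sum fun j _ => ?_
  rcases le_or_gt i j with hij | hji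
  · exact Nat.le_mul_of_pos_right _ (by have : (i : ℕ) ≤ j := hij; omega)
  · simp [hc.1 i j hji]

theorem finite_setOf_isKostant (η : Fin w → ℕ) : {c | IsKostant η c}.Finite := by
  refine (Set.Finite.pi fun i => Set.Finite.pi fun _ => Set.finite_Iic (η i)).subset ?_
  intro c hc
  simp only [Set.mem_pi, Set.mem_univ, Set.mem_Iic, forall_const]
  intro i j
  rcases le_or_gt i j with hij | hji
  · exact hc.apply_le hij
  · simp [hc.1 i j hji]

theorem isKostant_diagonal (η : Fin w → ℕ) :
    IsKostant η (fun i j => if i = j then η i else 0) := by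
  refine ⟨fun i j hji => if_neg hji.ne', fun m => ?_⟩
  rw [sum_eq_single m, sum_eq_single m]
  · simp
  · intro j _ hjm
    simp [Ne.symm hjm]
  · simp
  · intro i _ him
    refine sum_eq_zero fun j _ => ?_
    rcases eq_or_ne i j with rfl | hij
    · exact if_neg fun h => him (le_antisymm h.1 h.2)
    · simp [hij]
  · simp

theorem numColorings_diagonal (k : ℕ) (η : Fin w → ℕ) :
    numColorings k (fun i j => if i = j then η i else 0) = ∏ i, (η i + k - 1).choose (k - 1) := by
  refine prod_congr rfl fun i _ => ?_
  rw [prod_eq_single i]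
  · simp
  · intro j _ hji
    simp [Ne.symm hji]
  · simp

theorem log_numColorings (k : ℕ) (c : Fin w → Fin w → ℕ) :
    log (numColorings k c)
      = ∑ i, ∑ j, if i ≤ j then log ((c i j + k - 1).choose (k - 1)) else 0 := by
  have hne : ∀ i j : Fin w, (if i ≤ j then ((c i j + k - 1).choose (k - 1) : ℝ) else 1) ≠ 0 :=
    fun i j => by split_ifs <;> simp [Nat.choose_eq_zero_iff]; omega
  unfold numColorings
  push_cast
  rw [log_prod fun i _ => prod_ne_zero_iff.mpr fun j _ => hne i j]
  refine sum_congr rfl fun i _ => ?_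
  rw [log_prod fun j _ => hne i j]
  exact sum_congr rfl fun j _ => by split_ifs <;> simp

theorem numColorings_le_Tcol (k : ℕ) (hc : IsKostant η c) : numColorings k c ≤ Tcol k η :=
  le_csSup ((finite_setOf_isKostant η).image _).bddAbove ⟨c, hc, rfl⟩

theorem exists_numColorings_eq_Tcol (k : ℕ) (η : Fin w → ℕ) :
    ∃ c, IsKostant η c ∧ numColorings k c = Tcol k η := by
  rw [Tcol_eq_sSup]
  exact (Set.Nonempty.image _ ⟨_, isKostant_diagonal η⟩ : (numColorings k '' _).Nonempty).csSup_mem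
    ((finite_setOf_isKostant η).image _)

end Kostant

theorem Nat.choose_le_exp_mul_div_pow (n r : ℕ) : (n.choose r : ℝ) ≤ (exp 1 * n / r) ^ r := by
  rcases r.eq_zero_or_pos with rfl | hr
  · simp
  have hr' : (0 : ℝ) < r := by exact_mod_cast hr
  calc (n.choose r : ℝ) ≤ n ^ r / r.factorial := Nat.choose_le_pow_div r n
    _ = n ^ r / r ^ r * (r ^ r / r.factorial) := by field_simp
    _ ≤ n ^ r / r ^ r * exp r := by gcongr; exact pow_div_factorial_le_exp _ hr'.le r
    _ = (exp 1 * n / r) ^ r := by rw [← exp_one_pow]; ring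

theorem Nat.div_pow_le_choose (n r : ℕ) : (((n + 1 - r : ℕ) : ℝ) / r) ^ r ≤ n.choose r := by
  calc (((n + 1 - r : ℕ) : ℝ) / r) ^ r = (n + 1 - r : ℕ) ^ r / (r ^ r : ℕ) := by
        rw [div_pow]; push_cast; rfl
    _ ≤ (n + 1 - r : ℕ) ^ r / r.factorial := by
        exact div_le_div_of_nonneg_left (by positivity) (by exact_mod_cast r.factorial_pos)
          (by exact_mod_cast r.factorial_le_pow)
    _ ≤ n.choose r := Nat.pow_le_choose r n

theorem mul_log_div_le {c x : ℝ} (hc : 0 ≤ c) (hx : 0 < x) (t : ℝ) :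
    c * log (x / c) ≤ c * t + x * exp (-t) := by
  rcases hc.eq_or_lt with rfl | hc
  · simp only [div_zero, log_zero, mul_zero, zero_mul, zero_add]
    positivity
  have key := log_le_sub_one_of_pos (show 0 < x * exp (-t) / c by positivity)
  rw [log_div (by positivity) hc.ne', log_mul hx.ne' (exp_pos _).ne', log_exp] at key
  rw [log_div hx.ne' hc.ne']
  have : c * (x * exp (-t) / c) = x * exp (-t) := by field_simp
  nlinarith [mul_le_mul_of_nonneg_left key hc.le]

theorem log_choose_le {c K H : ℕ} (hcK : c ≤ K) (hH : 0 < H) (t : ℝ) :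
    log ((c + K - 1).choose (K - 1)) ≤ c * (log (K / H) + 2 + t) + H * exp (-t) := by
  rcases c.eq_zero_or_pos with rfl | hc
  · simp only [zero_add, Nat.choose_self, Nat.cast_one, log_one, CharP.cast_eq_zero, zero_mul]
    positivity
  have hK : (0 : ℝ) < K := by exact_mod_cast hc.trans_le hcK
  have hc' : (0 : ℝ) < c := by exact_mod_cast hc
  have hH' : (0 : ℝ) < H := by exact_mod_cast hH
  have hchoose : (c + K - 1).choose (K - 1) = (c + (K - 1)).choose c := by
    rw [show c + K - 1 = c + (K - 1) by omega]
    exact Nat.choose_symm_add.symm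
  have hn : ((c + (K - 1) : ℕ) : ℝ) ≤ 2 * K := by
    have : c + (K - 1) ≤ 2 * K := by omega
    exact_mod_cast this
  have hsplit : log (exp 1 * (2 * K) / c) = 1 + log 2 + log (K / H) + log (H / c) := by
    rw [show exp 1 * (2 * K) / c = exp 1 * 2 * (K / H) * (H / c) by field_simp,
      log_mul, log_mul, log_mul, log_exp] <;> positivity
  calc log ((c + K - 1).choose (K - 1))
      ≤ log ((exp 1 * (2 * K) / c) ^ c) := by
        rw [hchoose]
        refine log_le_log (by exact_mod_cast Nat.choose_pos (by omega)) ?_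
        refine (Nat.choose_le_exp_mul_div_pow _ _).trans ?_
        gcongr
    _ = c * (1 + log 2 + log (K / H)) + c * log (H / c) := by rw [log_pow, hsplit]; ring
    _ ≤ c * (log (K / H) + 2) + (c * t + H * exp (-t)) := by
        have hconst : 1 + log 2 + log (K / H) ≤ log (K / H) + 2 := by linarith [log_two_lt_d9]
        exact add_le_add (mul_le_mul_of_nonneg_left hconst hc'.le) (mul_log_div_le hc'.le hH' t)
    _ = c * (log (K / H) + 2 + t) + H * exp (-t) := by ring

theorem sum_exp_neg_length_le {w : ℕ} (i : Fin w) :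
    ∑ j : Fin w, (if i ≤ j then exp (-((j + 1 - i : ℕ) : ℝ)) else 0) ≤ 1 := by
  have hr : exp (-1) < 1 := exp_lt_one_iff.mpr (by norm_num)
  calc ∑ j : Fin w, (if i ≤ j then exp (-((j + 1 - i : ℕ) : ℝ)) else 0)
      = ∑ j ∈ Ico (i : ℕ) w, exp (-1) ^ (j + 1 - i) := by
        refine (Fin.sum_univ_eq_sum_range
          (fun j => if (i : ℕ) ≤ j then exp (-((j + 1 - i : ℕ) : ℝ)) else 0) w).trans ?_
        rw [← sum_filter]
        refine sum_congr (by ext; simp; omega) fun j _ => ?_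
        rw [← exp_nat_mul, mul_neg_one]
    _ = ∑ d ∈ range (w - i), exp (-1) * exp (-1) ^ d := by
        rw [sum_Ico_eq_sum_range]
        refine sum_congr rfl fun d _ => ?_
        rw [show (i : ℕ) + d + 1 - i = d + 1 by omega, pow_succ']
    _ ≤ exp (-1) * (1 - exp (-1))⁻¹ := by
        rw [← mul_sum, range_eq_Ico]
        refine mul_le_mul_of_nonneg_left ?_ (exp_pos _).le
        simpa using geom_sum_Ico_le_of_lt_one (exp_pos (-1)).le hr (m := 0) (n := w - i)
    _ ≤ 1 := by
        have h2 : 2 * exp (-1) ≤ 1 := by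
          rw [exp_neg, ← div_eq_mul_inv, div_le_one (exp_pos 1)]
          linarith [exp_one_gt_d9]
        rw [mul_inv_le_iff₀ (sub_pos.2 hr)]
        linarith

theorem log_numColorings_le {w H K : ℕ} {c : Fin w → Fin w → ℕ} (hH : 0 < H) (hHK : H ≤ K)
    (hc : IsKostant (fun _ : Fin w => H) c) :
    log (numColorings K c) ≤ H * w * (log (K / H) + 4) := by
  set L : Fin w → Fin w → ℝ := fun i j => ((j + 1 - i : ℕ) : ℝ) with hL
  set A := log ((K : ℝ) / H) + 2
  have hH' : (0 : ℝ) < H := by exact_mod_cast hH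
  have hA : 0 ≤ A := by
    have : (1 : ℝ) ≤ K / H := by rw [one_le_div hH']; exact_mod_cast hHK
    exact add_nonneg (log_nonneg this) zero_le_two
  have hterm : ∀ i j, (if i ≤ j then log ((c i j + K - 1).choose (K - 1)) else 0)
      ≤ c i j * (A + L i j) + H * (if i ≤ j then exp (-L i j) else 0) := by
    intro i j
    split_ifs with hij
    · simpa [A, add_assoc] using log_choose_le ((hc.apply_le hij).trans hHK) hH (L i j)
    · simp [hc.1 i j (not_le.mp hij)]
  have hweight : ∑ i, ∑ j, (c i j : ℝ) * L i j = w * H := by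
    have := hc.sum_mul_length
    simp only [sum_const, card_univ, Fintype.card_fin, smul_eq_mul] at this
    simp only [hL]
    exact_mod_cast this
  have hcount : ∑ i, ∑ j, (c i j : ℝ) ≤ w * H := by
    have := hc.sum_le
    simp only [sum_const, card_univ, Fintype.card_fin, smul_eq_mul] at this
    exact_mod_cast this
  have hrows : ∑ i, ∑ j, (H : ℝ) * (if i ≤ j then exp (-L i j) else 0) ≤ w * H := by
    calc ∑ i, ∑ j, (H : ℝ) * (if i ≤ j then exp (-L i j) else 0)
        ≤ ∑ _i : Fin w, (H : ℝ) * 1 := by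
          refine sum_le_sum fun i _ => ?_
          rw [← mul_sum]
          exact mul_le_mul_of_nonneg_left (sum_exp_neg_length_le i) hH'.le
      _ = w * H := by simp
  calc log (numColorings K c)
      ≤ ∑ i, ∑ j, (c i j * (A + L i j) + H * (if i ≤ j then exp (-L i j) else 0)) :=
        log_numColorings K c ▸ sum_le_sum fun i _ => sum_le_sum fun j _ => hterm i j
    _ = A * ∑ i, ∑ j, (c i j : ℝ) + ∑ i, ∑ j, (c i j : ℝ) * L i j
          + ∑ i, ∑ j, (H : ℝ) * (if i ≤ j then exp (-L i j) else 0) := by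
        simp only [mul_sum, ← sum_add_distrib]
        exact sum_congr rfl fun i _ => sum_congr rfl fun j _ => by ring
    _ ≤ A * (w * H) + w * H + w * H := by rw [hweight]; gcongr
    _ = H * w * (log (K / H) + 4) := by ring

theorem le_Lcol {H K : ℕ} (w : ℕ) (hH : 0 < H) (hK : 0 < K) :
    H * w * log (K / H) ≤ Lcol K H w := by
  have hchoose : (((K : ℕ) : ℝ) / H) ^ H ≤ (H + K - 1).choose (K - 1) := by
    rw [Nat.choose_symm_of_eq_add (show H + K - 1 = K - 1 + H by omega)]
    simpa [show H + K - 1 + 1 - H = K by omega] using Nat.div_pow_le_choose (H + K - 1) H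
  have hT : (((K : ℝ) / H) ^ H) ^ w ≤ Tcol K (fun _ : Fin w => H) := by
    calc (((K : ℝ) / H) ^ H) ^ w ≤ (((H + K - 1).choose (K - 1) : ℕ) : ℝ) ^ w := by gcongr
      _ = numColorings K (fun i j : Fin w => if i = j then H else 0) := by
        rw [numColorings_diagonal]; simp
      _ ≤ Tcol K (fun _ : Fin w => H) := by
        exact_mod_cast numColorings_le_Tcol K (isKostant_diagonal _)
  calc H * w * log (K / H) = log ((((K : ℝ) / H) ^ H) ^ w) := by
        rw [log_pow, log_pow]; ring
    _ ≤ Lcol K H w := log_le_log (by positivity) hT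

theorem Lcol_le {H K : ℕ} (w : ℕ) (hH : 0 < H) (hHK : H ≤ K) :
    Lcol K H w ≤ H * w * (log (K / H) + 4) := by
  obtain ⟨c, hc, hcT⟩ := exists_numColorings_eq_Tcol K (fun _ : Fin w => H)
  rw [Lcol, ← hcT]
  exact log_numColorings_le hH hHK hc

theorem Lcol_asymp_small_general (h w k : ℕ → ℕ)
    (hh : ∀ n, 0 < h n) (hk : ∀ n, 0 < k n)
    (hhk : Tendsto (fun n => (h n : ℝ) / k n) atTop (nhds 0)) :
    ∃ a b : ℝ, 0 < a ∧ a ≤ b ∧ ∀ᶠ n : ℕ in atTop,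
      a * ((h n : ℝ) * (w n : ℝ) * Real.log ((k n : ℝ) / (h n : ℝ))) ≤
        Lcol (k n) (h n) (w n) ∧
      Lcol (k n) (h n) (w n) ≤
        b * ((h n : ℝ) * (w n : ℝ) * Real.log ((k n : ℝ) / (h n : ℝ))) := by
  refine ⟨1, 5, one_pos, by norm_num, ?_⟩
  filter_upwards [hhk.eventually_lt_const (exp_pos (-1))] with n hn
  have hh' : (0 : ℝ) < h n := by exact_mod_cast hh n
  have hk' : (0 : ℝ) < k n := by exact_mod_cast hk n
  have hexp : exp 1 < k n / h n := by
    simpa [inv_div, ← exp_neg] using (inv_lt_inv₀ (exp_pos (-1)) (div_pos hh' hk')).mpr hn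
  have hlog : 1 ≤ log (k n / h n) := (le_log_iff_exp_le (by positivity)).mpr hexp.le
  have hhk_le : h n ≤ k n := by
    exact_mod_cast (one_le_div hh').mp ((one_le_exp zero_le_one).trans hexp.le)
  refine ⟨by simpa using le_Lcol (w n) (hh n) (hk n), (Lcol_le (w n) (hh n) hhk_le).trans ?_⟩
  nlinarith [mul_le_mul_of_nonneg_left hlog (by positivity : (0 : ℝ) ≤ h n * w n)]

/-- If `k ≻ 1` and `h ≺ k`, then `L^k[h,w] ≍ h·w·ln(k/h)`. -/
theorem Lcol_asymp_small (h w k : ℕ → ℕ)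
    (hh : ∀ n, 0 < h n) (hw : ∀ n, 0 < w n) (hk : ∀ n, 0 < k n)
    (hk1 : Tendsto (fun n => (1 : ℝ) / k n) atTop (nhds 0))
    (hhk : Tendsto (fun n => (h n : ℝ) / k n) atTop (nhds 0)) :
    ∃ a b : ℝ, 0 < a ∧ a ≤ b ∧ ∀ᶠ n : ℕ in atTop,
      a * ((h n : ℝ) * (w n : ℝ) * Real.log ((k n : ℝ) / (h n : ℝ))) ≤
        Lcol (k n) (h n) (w n) ∧
      Lcol (k n) (h n) (w n) ≤
        b * ((h n : ℝ) * (w n : ℝ) * Real.log ((k n : ℝ) / (h n : ℝ))) :=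
  Lcol_asymp_small_general h w k hh hk hhk
end
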